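/- Fix an integer k ≥ 2 and let r ∈ (0,1). Define r_1 = r, r_i = {2^{i−2} r + 1/2} for i = 2, …, k−1, and r_k = 1 − {2^{k−2} r}, where {x} denotes the fractional part of x. Then: (a) ∑_{i=1}^k r_i = k/2 for every r ∈ (0,1); and (b) if r_1 is distributed Uniform(0,1), then each r_i (i = 1, …, k) is distributed Uniform(0,1). -/

import Mathlib

/-!
(a) Hermite's identity `{x + 1/2} = {2x} - {x} + 1/2` turns each middle term into
`{2^{i+1} r} - {2^i r} + 1/2`, so the middle terms telescope to `{2^{k-2} r} - {r} + (k-2)/2`.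
As `{r} = r`, the first term `r` and the last term `1 - {2^{k-2} r}` cancel both fractional
parts, leaving `1 + (k-2)/2 = k/2`.

(b) Uniform(0,1) is the pull-back of Haar measure on the circle `ℝ/ℤ`, and `x ↦ {a x + c}`
factors through the circle map `y ↦ a • y + c`, which preserves Haar measure for every integer
`a ≠ 0`. The last term is moreover composed with the reflection `x ↦ 1 - x` of `(0,1)`.
-/

open MeasureTheory

/-- The permuted displacement construction (before permutation): `r₁ = r`,
`rᵢ = {2^{i−2} r + 1/2}` for `2 ≤ i ≤ k−1`, and `r_k = 1 − {2^{k−2} r}`.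
Here `j : Fin k` is the zero-based index, so `j = 0` corresponds to `r₁`. -/
noncomputable def pdSeq (k : ℕ) (r : ℝ) (j : Fin k) : ℝ :=
  if j.1 = 0 then r
  else if j.1 = k - 1 then 1 - Int.fract (2 ^ (k - 2) * r)
  else Int.fract (2 ^ (j.1 - 1) * r + 1 / 2)

open Set

theorem Int.fract_add_half {α : Type*} [Field α] [LinearOrder α] [IsStrictOrderedRing α]
    [FloorRing α] (x : α) :
    Int.fract (x + 1 / 2) = Int.fract (2 * x) - Int.fract x + 1 / 2 := by
  have h₀ := Int.floor_le x
  have h₁ := Int.lt_floor_add_one x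
  rcases lt_or_ge (x - ⌊x⌋) (1 / 2) with h | h
  · have e₁ : ⌊x + 1 / 2⌋ = ⌊x⌋ := Int.floor_eq_iff.mpr ⟨by linarith, by linarith⟩
    have e₂ : ⌊2 * x⌋ = 2 * ⌊x⌋ :=
      Int.floor_eq_iff.mpr ⟨by push_cast; linarith, by push_cast; linarith⟩
    rw [Int.fract, Int.fract, Int.fract, e₁, e₂]
    push_cast
    ring
  · have e₁ : ⌊x + 1 / 2⌋ = ⌊x⌋ + 1 :=
      Int.floor_eq_iff.mpr ⟨by push_cast; linarith, by push_cast; linarith⟩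
    have e₂ : ⌊2 * x⌋ = 2 * ⌊x⌋ + 1 :=
      Int.floor_eq_iff.mpr ⟨by push_cast; linarith, by push_cast; linarith⟩
    rw [Int.fract, Int.fract, Int.fract, e₁, e₂]
    push_cast
    ring

section pdSeq

variable (m : ℕ) (r : ℝ)

theorem pdSeq_zero : pdSeq (m + 2) r 0 = r := rfl

theorem pdSeq_last : pdSeq (m + 2) r (Fin.last m).succ = 1 - Int.fract (2 ^ m * r) := by
  simp [pdSeq]

theorem pdSeq_succ_castSucc (i : Fin m) :
    pdSeq (m + 2) r i.castSucc.succ = Int.fract (2 ^ (i : ℕ) * r + 1 / 2) := by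
  simp [pdSeq, i.isLt.ne]

end pdSeq

theorem sum_pdSeq (k : ℕ) (hk : 2 ≤ k) {r : ℝ} (hr : r ∈ Ico 0 1) :
    ∑ j : Fin k, pdSeq k r j = k / 2 := by
  obtain ⟨m, rfl⟩ : ∃ m, k = m + 2 := ⟨k - 2, by omega⟩
  set f : ℕ → ℝ := fun i => Int.fract (2 ^ i * r)
  have hmid (i : ℕ) : Int.fract (2 ^ i * r + 1 / 2) = f (i + 1) - f i + 1 / 2 := by
    rw [Int.fract_add_half, ← mul_assoc, ← pow_succ']
  have hf₀ : f 0 = r := by simpa [f] using Int.fract_eq_self.mpr hr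
  rw [Fin.sum_univ_succ, Fin.sum_univ_castSucc, pdSeq_zero, pdSeq_last]
  simp only [pdSeq_succ_castSucc, hmid]
  rw [Fin.sum_univ_eq_sum_range (fun i => f (i + 1) - f i + 1 / 2), Finset.sum_add_distrib,
    Finset.sum_range_sub, hf₀]
  simp only [Finset.sum_const, Finset.card_range, nsmul_eq_mul]
  push_cast
  ring

namespace UnitAddCircle

theorem measurePreserving_mk_Ioo :
    MeasurePreserving ((↑) : ℝ → UnitAddCircle) (volume.restrict (Ioo 0 1)) volume := by
  simpa [Measure.restrict_congr_set Ioo_ae_eq_Ioc] using UnitAddCircle.measurePreserving_mk 0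

theorem equivIco_zero_coe (x : ℝ) :
    (AddCircle.equivIco 1 0 (x : UnitAddCircle) : ℝ) = Int.fract x := by
  simp [AddCircle.coe_equivIco_mk_apply]

theorem measurePreserving_equivIco_zero :
    MeasurePreserving (fun y : UnitAddCircle => (AddCircle.equivIco 1 0 y : ℝ)) volume
      (volume.restrict (Ioo 0 1)) := by
  have hm : Measurable fun y : UnitAddCircle => (AddCircle.equivIco 1 0 y : ℝ) :=
    measurable_subtype_coe.comp (AddCircle.measurableEquivIco 1 0).measurable
  refine ⟨hm, ?_⟩
  rw [← measurePreserving_mk_Ioo.map_eq, Measure.map_map hm measurePreserving_mk_Ioo.measurable]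
  refine (Measure.map_congr ?_).trans Measure.map_id
  filter_upwards [ae_restrict_mem measurableSet_Ioo] with x hx
  rw [Function.comp_apply, equivIco_zero_coe, Int.fract_eq_self.mpr ⟨hx.1.le, hx.2⟩, id]

end UnitAddCircle

theorem measurePreserving_fract_int_mul_add {a : ℤ} (ha : a ≠ 0) (c : ℝ) :
    MeasurePreserving (fun x : ℝ => Int.fract (a * x + c))
      (volume.restrict (Ioo 0 1)) (volume.restrict (Ioo 0 1)) := by
  have hcircle : MeasurePreserving (fun y : UnitAddCircle => a • y + c) volume volume :=
    (measurePreserving_add_right volume _).comp (Measure.measurePreserving_zsmul volume ha)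
  convert UnitAddCircle.measurePreserving_equivIco_zero.comp
    (hcircle.comp UnitAddCircle.measurePreserving_mk_Ioo) using 1
  ext x
  rw [Function.comp_apply, Function.comp_apply, ← UnitAddCircle.equivIco_zero_coe,
    AddCircle.coe_add, ← zsmul_eq_mul, AddCircle.coe_zsmul]

theorem measurePreserving_one_sub_restrict_Ioo :
    MeasurePreserving (fun x : ℝ => 1 - x)
      (volume.restrict (Ioo 0 1)) (volume.restrict (Ioo 0 1)) := by
  simpa using (Measure.measurePreserving_sub_left volume (1 : ℝ)).restrict_preimage
    (measurableSet_Ioo (a := (0 : ℝ)) (b := 1))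

theorem measurePreserving_pdSeq (k : ℕ) (j : Fin k) :
    MeasurePreserving (fun r => pdSeq k r j)
      (volume.restrict (Ioo 0 1)) (volume.restrict (Ioo 0 1)) := by
  unfold pdSeq
  split_ifs
  · exact .id _
  · simpa [Function.comp_def] using measurePreserving_one_sub_restrict_Ioo.comp
      (measurePreserving_fract_int_mul_add (a := 2 ^ (k - 2)) (by positivity) 0)
  · simpa using measurePreserving_fract_int_mul_add (a := 2 ^ (j.1 - 1)) (by positivity) (1 / 2)

theorem pdSeq_sum_and_uniform_general (k : ℕ) (hk : 2 ≤ k)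
    {Ω : Type*} [MeasurableSpace Ω] (μ : Measure Ω)
    (X : Ω → ℝ) (hXm : Measurable X)
    (hXlaw : μ.map X = volume.restrict (Set.Ioo (0 : ℝ) 1)) :
    (∀ r ∈ Set.Ioo (0 : ℝ) 1, ∑ j : Fin k, pdSeq k r j = k / 2) ∧
    (∀ j : Fin k,
      μ.map (fun ω => pdSeq k (X ω) j) = volume.restrict (Set.Ioo (0 : ℝ) 1)) := by
  refine ⟨fun r hr => sum_pdSeq k hk (Ioo_subset_Ico_self hr), fun j => ?_⟩
  have hj := measurePreserving_pdSeq k j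
  rw [← Function.comp_def (fun r => pdSeq k r j) X, ← Measure.map_map hj.measurable hXm, hXlaw,
    hj.map_eq]

/-- (a) The permuted displacement variates sum to `k/2` for every `r ∈ (0,1)`; and
(b) if `r` is Uniform(0,1), then each `rᵢ` is Uniform(0,1). -/
theorem pdSeq_sum_and_uniform (k : ℕ) (hk : 2 ≤ k)
    {Ω : Type*} [MeasurableSpace Ω] (μ : Measure Ω) [IsProbabilityMeasure μ]
    (X : Ω → ℝ) (hXm : Measurable X)
    (hXlaw : μ.map X = volume.restrict (Set.Ioo (0 : ℝ) 1)) :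
    (∀ r ∈ Set.Ioo (0 : ℝ) 1, ∑ j : Fin k, pdSeq k r j = k / 2) ∧
    (∀ j : Fin k,
      μ.map (fun ω => pdSeq k (X ω) j) = volume.restrict (Set.Ioo (0 : ℝ) 1)) :=
  pdSeq_sum_and_uniform_general k hk μ X hXm hXlaw
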